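/- arXiv:1901.07270 — 2 statements merged into one kernel-verified Lean document; each statement's English description precedes it below -/
import Mathlib

section
/- Let σ > 0, β > 0, μ < β, K > 0, δ ≥ 0 and ε ≥ δ/β, let θ > 1 be the positive root of Q_0(ψ) = (σ²/2)ψ(ψ−1) + μψ − β, set L = ((β(K+ε)−δ)/β)·(θ/(θ−1)) and A = (1/θ)L^{1−θ}, and assume L > K + ε. Define w(x) = A x^θ − δ/β for 0 < x ≤ L and w(x) = x − K − ε for x > L. Then for every λ ≥ 0 and every x ∈ (0,L) ∪ (L,∞): (σ²/2)x²w''(x) + μx w'(x) − (β+λ)w(x) + λ·max(w(x), (x−K)₊) − (δ + ελ) ≤ 0. -/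
open Real Set Filter

set_option maxHeartbeats 1600000 in
/-- Pointwise supermartingale drift inequality for `w = w_{K,ε,δ}` (case `ε ≥ δ/β`):
for every rate `λ ≥ 0` and every `x ∈ (0,L) ∪ (L,∞)`,
`(σ²/2)x²w'' + μxw' − (β+lam)w + λ·max(w,(x−K)₊) − (δ+ελ) ≤ 0`. -/
theorem stmt12 (σ β μ K δ ε : ℝ) (hσ : 0 < σ) (hβ : 0 < β) (hμ : μ < β)
    (hK : 0 < K) (hδ : 0 ≤ δ) (hε : δ / β ≤ ε)
    (θ : ℝ) (hθ1 : 1 < θ) (hθ : σ ^ 2 / 2 * θ * (θ - 1) + μ * θ - β = 0)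
    (L A : ℝ) (hL : L = (β * (K + ε) - δ) / β * (θ / (θ - 1)))
    (hA : A = 1 / θ * L ^ (1 - θ)) (hLKε : K + ε < L)
    (w : ℝ → ℝ)
    (hw1 : ∀ x : ℝ, 0 < x → x ≤ L → w x = A * x ^ θ - δ / β)
    (hw2 : ∀ x : ℝ, L < x → w x = x - K - ε) :
    ∀ lam : ℝ, 0 ≤ lam → ∀ x ∈ Set.Ioo 0 L ∪ Set.Ioi L,
      σ ^ 2 / 2 * x ^ 2 * deriv (deriv w) x + μ * x * deriv w x
        - (β + lam) * w x + lam * max (w x) (max (x - K) 0) - (δ + ε * lam) ≤ 0 := by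
  have hθ0 : (0:ℝ) < θ := by linarith
  have hθ1' : (0:ℝ) < θ - 1 := by linarith
  have hε0 : (0:ℝ) ≤ ε := le_trans (div_nonneg hδ hβ.le) hε
  have hL0 : (0:ℝ) < L := by linarith
  have hA0 : 0 < A := by rw [hA]; positivity
  have hβμθ : μ * θ < β := by
    nlinarith [mul_pos (mul_pos (div_pos (pow_pos hσ 2) two_pos) hθ0) hθ1']
  have hLrelβ : L * (θ - 1) * β = (β * (K + ε) - δ) * θ := by
    field_simp [sub_ne_zero.mpr (ne_of_gt hθ1)] at hL
    linarith [hL]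
  have hδβ : β * (δ / β) = δ := by field_simp
  have hALθ : A * L ^ θ = L / θ := by
    rw [hA, mul_assoc, ← Real.rpow_add hL0,
      show (1:ℝ) - θ + θ = 1 by ring, Real.rpow_one]
    ring
  have hAθL : A * θ * L ^ (θ - 1) = 1 := by
    rw [hA, show 1 / θ * L ^ (1 - θ) * θ * L ^ (θ - 1)
        = θ / θ * (L ^ (1 - θ) * L ^ (θ - 1)) by ring,
      ← Real.rpow_add hL0, div_self hθ0.ne',
      show (1:ℝ) - θ + (θ - 1) = 0 by ring, Real.rpow_zero]
    ring
  have hLL : L - L / θ = K + ε - δ / β := by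
    field_simp
    linear_combination hLrelβ
  intro lam hlam x hx
  rcases hx with hx | hx
  · -- interior case 0 < x < L
    obtain ⟨hx0, hxL⟩ := hx
    have hdw : ∀ y ∈ Set.Ioo (0:ℝ) L, deriv w y = A * (θ * y ^ (θ - 1)) := by
      intro y hy
      have hwf : w =ᶠ[nhds y] fun z => A * z ^ θ - δ / β := by
        filter_upwards [Ioo_mem_nhds hy.1 hy.2] with z hz using hw1 z hz.1 hz.2.le
      rw [hwf.deriv_eq]
      exact (((Real.hasDerivAt_rpow_const (Or.inl hy.1.ne')).const_mul A).sub_const (δ/β)).deriv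
    have h1 : deriv w x = A * (θ * x ^ (θ - 1)) := hdw x ⟨hx0, hxL⟩
    have h2 : deriv (deriv w) x = A * (θ * ((θ - 1) * x ^ (θ - 2))) := by
      have hev : deriv w =ᶠ[nhds x] fun y => A * (θ * y ^ (θ - 1)) := by
        filter_upwards [isOpen_Ioo.mem_nhds ⟨hx0, hxL⟩] with y hy using hdw y hy
      rw [hev.deriv_eq]
      have hder : HasDerivAt (fun y : ℝ => A * (θ * y ^ (θ - 1)))
          (A * (θ * ((θ - 1) * x ^ (θ - 1 - 1)))) x :=
        (((Real.hasDerivAt_rpow_const (Or.inl hx0.ne')).const_mul θ).const_mul A)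
      rw [show θ - 1 - 1 = θ - 2 by ring] at hder
      exact hder.deriv
    have hwx : w x = A * x ^ θ - δ / β := hw1 x hx0 hxL.le
    have hx2 : x ^ (2:ℕ) * x ^ (θ - 2) = x ^ θ := by
      rw [← Real.rpow_natCast x 2, ← Real.rpow_add hx0]
      norm_num
    have hx1 : x * x ^ (θ - 1) = x ^ θ := by
      rw [Real.rpow_sub_one hx0.ne']
      field_simp
    have hmaxT : max (w x) (max (x - K) 0) ≤ A * x ^ θ - δ / β + ε := by
      have hwε : (0:ℝ) ≤ A * x ^ θ - δ / β + ε := by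
        have h := Real.rpow_pos_of_pos hx0 θ
        nlinarith [mul_pos hA0 h]
      have hbern : x - K ≤ A * x ^ θ - δ / β + ε := by
        have hs : (-1:ℝ) ≤ x / L - 1 := by
          have : 0 < x / L := div_pos hx0 hL0
          linarith
        have hb := one_add_mul_self_le_rpow_one_add hs hθ1.le
        rw [show (1 + (x / L - 1)) = x / L by ring,
          Real.div_rpow hx0.le hL0.le] at hb
        have hLθ : (0:ℝ) < L ^ θ := Real.rpow_pos_of_pos hL0 θ
        have hb2 : A * L ^ θ * (1 + θ * (x / L - 1)) ≤ A * x ^ θ := by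
          calc A * L ^ θ * (1 + θ * (x / L - 1))
              ≤ A * L ^ θ * (x ^ θ / L ^ θ) :=
                mul_le_mul_of_nonneg_left hb (le_of_lt (mul_pos hA0 hLθ))
            _ = A * x ^ θ := by field_simp
        rw [hALθ, show L / θ * (1 + θ * (x / L - 1)) = L / θ + θ * (L / θ) * (x / L - 1)
          by ring] at hb2
        have hxLd : θ * (L / θ) * (x / L - 1) = x - L := by
          field_simp
        rw [hxLd] at hb2
        linarith [hb2, hLL]
      rw [hwx]
      exact max_le (by linarith) (max_le hbern hwε)
    rw [h1, h2, hwx]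
    have key : σ ^ 2 / 2 * x ^ 2 * (A * (θ * ((θ - 1) * x ^ (θ - 2)))) +
        μ * x * (A * (θ * x ^ (θ - 1)))
        = β * (A * x ^ θ) := by
      have e1 : σ ^ 2 / 2 * x ^ 2 * (A * (θ * ((θ - 1) * x ^ (θ - 2))))
          = σ ^ 2 / 2 * θ * (θ - 1) * A * (x ^ (2:ℕ) * x ^ (θ - 2)) := by ring
      have e2 : μ * x * (A * (θ * x ^ (θ - 1))) = μ * θ * A * (x * x ^ (θ - 1)) := by ring
      rw [e1, e2, hx2, hx1]
      linear_combination (A * x ^ θ) * hθ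
    rw [hwx] at hmaxT
    rw [key]
    set T := A * x ^ θ with hT
    set M := max (T - δ / β) (max (x - K) 0) with hM
    have hprod : 0 ≤ lam * (T - δ / β + ε - M) := mul_nonneg hlam (by linarith)
    nlinarith [hδβ, hprod]
  · -- case x > L
    have hxL : L < x := hx
    have hdw : ∀ y ∈ Set.Ioi L, deriv w y = 1 := by
      intro y hy
      have hwf : w =ᶠ[nhds y] fun z => z - K - ε := by
        filter_upwards [Ioi_mem_nhds hy] with z hz using hw2 z hz
      rw [hwf.deriv_eq]
      have : HasDerivAt (fun z : ℝ => z - K - ε) 1 y :=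
        ((hasDerivAt_id y).sub_const K).sub_const ε
      exact this.deriv
    have h1 : deriv w x = 1 := hdw x hxL
    have h2 : deriv (deriv w) x = 0 := by
      have hev : deriv w =ᶠ[nhds x] fun _ => (1:ℝ) := by
        filter_upwards [isOpen_Ioi.mem_nhds hxL] with y hy using hdw y hy
      rw [hev.deriv_eq, deriv_const]
    have hwx : w x = x - K - ε := hw2 x hxL
    have hmax : max (w x) (max (x - K) 0) = x - K := by
      rw [hwx, max_eq_left (by nlinarith : (0:ℝ) ≤ x - K)]
      exact max_eq_right (by linarith)
    rw [h1, h2, hmax, hwx]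
    have hkey : β * (K + ε) - δ ≤ (β - μ) * L := by
      have h3 : β * (K + ε) - δ = L * (θ - 1) * β / θ := by
        rw [eq_div_iff hθ0.ne']
        linarith [hLrelβ]
      rw [h3, div_le_iff₀ hθ0]
      nlinarith [mul_nonneg hL0.le (by linarith : (0:ℝ) ≤ β - μ * θ)]
    have h4 : (β - μ) * L ≤ (β - μ) * x :=
      mul_le_mul_of_nonneg_left hxL.le (by linarith)
    nlinarith [hkey, h4]
end

section
/- Let σ > 0, β > 0, μ < β, K ∈ ℝ, c ≥ 0 and λ̂ > 0. Let θ > 1 be the positive root of Q_0(ψ) = (σ²/2)ψ(ψ−1) + μψ − β and φ̂ < 0 the negative root of Q_{λ̂}(ψ) = (σ²/2)ψ(ψ−1) + μψ − (β+λ̂). For L > 0 define A(L) = L^{−θ}(L − K + c/β) and B(L) = L^{−φ̂}( ((β−μ)/(λ̂+β−μ))L + (c−βK)/(β+λ̂) ). Suppose the quantity D = θ − φ̂(β−μ)/(λ̂+β−μ) − λ̂/(λ̂+β−μ) is nonzero. Then the smooth-fit equation θ A(L) L^{θ−1} = φ̂ B(L) L^{φ̂−1} + λ̂/(λ̂+β−μ)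 holds if and only if L = (βK − c)·( θ/β − φ̂/(β+λ̂) )·D^{−1}. -/
/-- Smooth fit at the threshold `L` in the single-rate case: the smooth-fit equation
holds if and only if `L = (βK − c)(θ/β − φ̂/(β+λ̂))/D`. -/
theorem stmt18 (σ β μ K c lamh : ℝ) (hσ : 0 < σ) (hβ : 0 < β) (hμ : μ < β)
    (hc : 0 ≤ c) (hlamh : 0 < lamh)
    (θ : ℝ) (hθ1 : 1 < θ) (hθ : σ ^ 2 / 2 * θ * (θ - 1) + μ * θ - β = 0)
    (φ : ℝ) (hφ0 : φ < 0) (hφ : σ ^ 2 / 2 * φ * (φ - 1) + μ * φ - (β + lamh) = 0)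
    (D : ℝ) (hD : D = θ - φ * (β - μ) / (lamh + β - μ) - lamh / (lamh + β - μ))
    (hDne : D ≠ 0)
    (L : ℝ) (hL : 0 < L) :
    (θ * (L ^ (-θ) * (L - K + c / β)) * L ^ (θ - 1)
      = φ * (L ^ (-φ) * ((β - μ) / (lamh + β - μ) * L + (c - β * K) / (β + lamh)))
          * L ^ (φ - 1)
        + lamh / (lamh + β - μ))
    ↔ L = (β * K - c) * (θ / β - φ / (β + lamh)) / D := by
  have hS : lamh + β - μ ≠ 0 := by nlinarith
  have hbl : β + lamh ≠ 0 := by nlinarith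
  have hβ' : (β : ℝ) ≠ 0 := ne_of_gt hβ
  have hL' : L ≠ 0 := ne_of_gt hL
  have h1 : L ^ (-θ) * L ^ (θ - 1) = L⁻¹ := by
    rw [← Real.rpow_add hL, show -θ + (θ - 1) = -1 by ring, Real.rpow_neg_one]
  have h2 : L ^ (-φ) * L ^ (φ - 1) = L⁻¹ := by
    rw [← Real.rpow_add hL, show -φ + (φ - 1) = -1 by ring, Real.rpow_neg_one]
  have e1 : θ * (L ^ (-θ) * (L - K + c / β)) * L ^ (θ - 1)
      = θ * (L - K + c / β) * L⁻¹ := by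
    rw [show θ * (L ^ (-θ) * (L - K + c / β)) * L ^ (θ - 1)
        = θ * (L - K + c / β) * (L ^ (-θ) * L ^ (θ - 1)) from by ring, h1]
  have e2 : φ * (L ^ (-φ) * ((β - μ) / (lamh + β - μ) * L + (c - β * K) / (β + lamh)))
          * L ^ (φ - 1)
      = φ * ((β - μ) / (lamh + β - μ) * L + (c - β * K) / (β + lamh)) * L⁻¹ := by
    rw [show φ * (L ^ (-φ) * ((β - μ) / (lamh + β - μ) * L + (c - β * K) / (β + lamh)))
          * L ^ (φ - 1)
        = φ * ((β - μ) / (lamh + β - μ) * L + (c - β * K) / (β + lamh))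
          * (L ^ (-φ) * L ^ (φ - 1)) from by ring, h2]
  rw [e1, e2, eq_div_iff hDne, hD]
  set E : ℝ := (β * K - c) * (θ / β - φ / (β + lamh)) with hE
  have hkey : θ * (L - K + c / β) * L⁻¹
      - (φ * ((β - μ) / (lamh + β - μ) * L + (c - β * K) / (β + lamh)) * L⁻¹
        + lamh / (lamh + β - μ))
      = (L * (θ - φ * (β - μ) / (lamh + β - μ) - lamh / (lamh + β - μ)) - E) * L⁻¹ := by
    rw [hE]
    field_simp
    ring
  constructor <;> intro h
  · have h0 : (L * (θ - φ * (β - μ) / (lamh + β - μ) - lamh / (lamh + β - μ)) - E) * L⁻¹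
        = 0 := by rw [← hkey]; rw [h]; ring
    rcases mul_eq_zero.1 h0 with h0 | h0
    · linarith
    · exact absurd h0 (inv_ne_zero hL')
  · have h0 : L * (θ - φ * (β - μ) / (lamh + β - μ) - lamh / (lamh + β - μ)) - E = 0 := by
      rw [h]; ring
    have := hkey
    rw [h0, zero_mul, sub_eq_zero] at this
    exact this
end
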